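/- arXiv:2404.06655 — 4 statements merged into one kernel-verified Lean document; each statement's English description precedes it below -/
import Mathlib

section
/- Let R be a semilocal Prüfer domain with fraction field K, let K' ⊆ K be a subfield, and let R' denote the intersection R ∩ K' (taken inside K, i.e. the subring of K' consisting of elements lying in the image of R). Then: (1) R' is a Prüfer domain; (2) R' is semilocal; (3) the fraction field of R' is K', i.e. every element of K' can be written as a quotient a/b with a, b ∈ R', b ≠ 0; and (4) every maximal ideal of R' is the contraction of a maximal ideal of R, i.e. the canonical map MaxSpec(R) → MaxSpec(R'), m ↦ m ∩ R', is surjective. -/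
/-- A valuation ring, per the context: an integral domain in which, for every pair of
elements, one divides the other. -/
def IsValuationDomain (V : Type*) [CommRing V] : Prop :=
  IsDomain V ∧ ∀ a b : V, a ∣ b ∨ b ∣ a

/-- A Prüfer domain, per the context: an integral domain whose localisation at every
prime ideal is a valuation ring. -/
def IsPrueferDomain (R : Type*) [CommRing R] : Prop :=
  IsDomain R ∧ ∀ (p : Ideal R) [p.IsPrime], IsValuationDomain (Localization.AtPrime p)

/-- A semilocal ring: a ring having only finitely many maximal ideals. -/
def IsSemilocalRing (R : Type*) [CommRing R] : Prop :=
  {m : Ideal R | m.IsMaximal}.Finite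

/-!
Let `V_m ⊆ K` be the localisations of `R` at its finitely many maximal ideals `m`: valuation rings
with `⋂ V_m = R`. For `x ∈ K'` choose `N ≥ 1` such that `g = x^(N+1) - x + 1` is a unit of every
`V_m` containing `x`; this only asks that the residue `ξ` of `x` avoid `ξ^(N+1) - ξ + 1 = 0`, and
where `x ∉ V_m` the valuation of `g` is that of `x^(N+1)`. Then `s = g⁻¹ ∈ K'` satisfies
`s, s x ∈ R ∩ K' = R'`, and `s` is a unit of `V_m` whenever `x ∈ V_m`. So `x = (s x) / s`; and if
the prime `p'` of `R'` lies under `m` (prime avoidance: units of `R` lying in `R'` are units of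
`R'`), then applying this to whichever of `x`, `x⁻¹` lies in `V_m` gives `s ∉ p'`, so that element
lies in `R'_{p'}`.
-/

open Finset in
theorem exists_pow_succ_sub_add_one_ne_zero {ι : Type*} [Finite ι] {F : ι → Type*}
    [∀ i, CommRing (F i)] [∀ i, IsDomain (F i)] (ξ : ∀ i, F i) :
    ∃ N : ℕ, 1 ≤ N ∧ ∀ i, ξ i ^ (N + 1) - ξ i + 1 ≠ 0 := by
  classical
  have := Fintype.ofFinite ι
  -- Taking `N = k * L` with `L` a multiple of every finite order of a `ξ i` settles the torsion
  -- `ξ i`; each other `ξ i` excludes at most one `k`.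
  set L := ∏ i ∈ univ.filter (fun i => IsOfFinOrder (ξ i)), orderOf (ξ i)
  have hL : 0 < L := prod_pos fun i hi => (mem_filter.1 hi).2.orderOf_pos
  have hbad : ∀ i, {k : ℕ | ξ i ^ (k * L + 1) - ξ i + 1 = 0}.Subsingleton := by
    intro i
    by_cases h0 : ξ i = 0
    · simp [h0]
    by_cases hfin : IsOfFinOrder (ξ i)
    · suffices ∀ k, ξ i ^ (k * L + 1) = ξ i by simp [this]
      intro k
      have : orderOf (ξ i) ∣ k * L :=
        (dvd_prod_of_mem _ (mem_filter.2 ⟨mem_univ i, hfin⟩)).mul_left k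
      rw [pow_succ, orderOf_dvd_iff_pow_eq_one.1 this, one_mul]
    suffices ∀ k d, ξ i ^ (k * L + 1) - ξ i + 1 = 0 →
        ξ i ^ ((k + d + 1) * L + 1) - ξ i + 1 ≠ 0 by
      intro k hk k' hk'
      by_contra hne
      rcases Nat.lt_or_gt_of_ne hne with h | h
      · obtain ⟨d, rfl⟩ := Nat.exists_eq_add_of_lt h
        exact this k d hk hk'
      · obtain ⟨d, rfl⟩ := Nat.exists_eq_add_of_lt h
        exact this k' d hk' hk
    intro k d hk hk'
    have hexp : (k + d + 1) * L + 1 = (k * L + 1) + (d + 1) * L := by ring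
    have hprod : ξ i ^ (k * L + 1) * (ξ i ^ ((d + 1) * L) - 1) = 0 := by
      rw [hexp, pow_add] at hk'
      linear_combination hk' - hk
    refine hfin (isOfFinOrder_iff_pow_eq_one.2 ⟨(d + 1) * L, by positivity, ?_⟩)
    exact sub_eq_zero.1 ((mul_eq_zero.1 hprod).resolve_left (pow_ne_zero _ h0))
  obtain ⟨k, hk1, hk⟩ := ((Set.Ici_infinite 1).sdiff
    (Set.finite_iUnion fun i => (hbad i).finite)).nonempty
  exact ⟨k * L, Nat.mul_pos hk1 hL, fun i h => hk (Set.mem_iUnion.2 ⟨i, h⟩)⟩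

namespace ValuationSubring

variable {K : Type*} [Field K] {x : K} {N : ℕ}

theorem valuation_pow_succ_sub_add_one_of_notMem (V : ValuationSubring K) (hN : 1 ≤ N)
    (hx : x ∉ V) :
    V.valuation (x ^ (N + 1) - x + 1) = V.valuation x ^ (N + 1) := by
  have hx1 : 1 < V.valuation x := not_le.1 (mt (V.valuation_le_one_iff x).1 hx)
  rw [show x ^ (N + 1) - x + 1 = x ^ (N + 1) + (1 - x) by ring,
    V.valuation.map_add_eq_of_lt_left, map_pow]
  rw [map_pow]
  refine lt_of_le_of_lt ?_ (lt_self_pow₀ hx1 (show 1 < N + 1 by omega))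
  simpa [hx1.le] using V.valuation.map_sub 1 x

theorem valuation_pow_succ_sub_add_one_of_mem (V : ValuationSubring K) (hx : x ∈ V)
    (hres : IsLocalRing.residue V ⟨x, hx⟩ ^ (N + 1) - IsLocalRing.residue V ⟨x, hx⟩ + 1 ≠ 0) :
    V.valuation (x ^ (N + 1) - x + 1) = 1 := by
  rw [← map_pow, ← map_sub, ← map_one (IsLocalRing.residue V), ← map_add,
    IsLocalRing.residue_ne_zero_iff_isUnit, V.valuation_eq_one_iff] at hres
  simpa using hres

theorem exists_denominator_of_finite {ι : Type*} [Finite ι] [Nonempty ι]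
    (V : ι → ValuationSubring K) (F : Subfield K) (hx : x ∈ F) :
    ∃ s ∈ F, s ≠ 0 ∧ ∀ i, s ∈ V i ∧ s * x ∈ V i ∧ (x ∈ V i → (V i).valuation s = 1) := by
  obtain ⟨N, hN, hres⟩ := exists_pow_succ_sub_add_one_ne_zero
    (fun i : {i // x ∈ V i} => IsLocalRing.residue (V i.1) ⟨x, i.2⟩)
  set g := x ^ (N + 1) - x + 1
  have hv : ∀ i, (V i).valuation g ≠ 0 ∧ (V i).valuation g⁻¹ ≤ 1 ∧
      (V i).valuation (g⁻¹ * x) ≤ 1 ∧ (x ∈ V i → (V i).valuation g⁻¹ = 1) := by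
    intro i
    by_cases hxi : x ∈ V i
    · have hg : (V i).valuation g = 1 :=
        (V i).valuation_pow_succ_sub_add_one_of_mem hxi (hres ⟨i, hxi⟩)
      refine ⟨by simp [hg], by simp [hg], ?_, fun _ => by simp [hg]⟩
      simpa [hg] using ((V i).valuation_le_one_iff x).2 hxi
    · have hg : (V i).valuation g = (V i).valuation x ^ (N + 1) :=
        (V i).valuation_pow_succ_sub_add_one_of_notMem hN hxi
      have hx1 : 1 < (V i).valuation x := not_le.1 (mt ((V i).valuation_le_one_iff x).1 hxi)
      have hx0 : (V i).valuation x ≠ 0 := (zero_lt_one.trans hx1).ne'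
      refine ⟨by simp [hg, hx0], ?_, ?_, fun h => absurd h hxi⟩
      · rw [map_inv₀, hg]
        exact inv_le_one_of_one_le₀ (one_le_pow₀ hx1.le)
      · rw [map_mul, map_inv₀, hg, pow_succ, mul_inv, mul_assoc, inv_mul_cancel₀ hx0, mul_one]
        exact inv_le_one_of_one_le₀ (one_le_pow₀ hx1.le)
  obtain ⟨i₀⟩ := ‹Nonempty ι›
  have hg0 : g ≠ 0 := fun h => (hv i₀).1 (by simp [h])
  refine ⟨g⁻¹, F.inv_mem (F.add_mem (F.sub_mem (F.pow_mem hx _) hx) F.one_mem),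
    inv_ne_zero hg0, fun i => ⟨?_, ?_, (hv i).2.2.2⟩⟩
  · exact (V i).mem_of_valuation_le_one _ (hv i).2.1
  · exact (V i).mem_of_valuation_le_one _ (hv i).2.2.1

end ValuationSubring

theorem Localization.AtPrime.dvd_total_of_forall_exists {A : Type*} [CommRing A] (p : Ideal A)
    [p.IsPrime] (h : ∀ a b : A, ∃ σ ∉ p, a ∣ σ * b ∨ b ∣ σ * a)
    (x y : Localization.AtPrime p) : x ∣ y ∨ y ∣ x := by
  have hassoc : ∀ x : Localization.AtPrime p, ∃ a : A, Associated x (algebraMap A _ a) := by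
    intro x
    obtain ⟨⟨a, s⟩, rfl⟩ := IsLocalization.mk'_surjective p.primeCompl x
    exact ⟨a, (IsLocalization.map_units _ s).unit, IsLocalization.mk'_spec _ a s⟩
  have hdvd : ∀ a b : A, ∀ σ ∉ p, a ∣ σ * b →
      algebraMap A (Localization.AtPrime p) a ∣ algebraMap A _ b := by
    intro a b σ hσ hab
    have := map_dvd (algebraMap A (Localization.AtPrime p)) hab
    rwa [map_mul, (IsLocalization.map_units _ (⟨σ, hσ⟩ : p.primeCompl)).dvd_mul_left] at this
  obtain ⟨a, ha⟩ := hassoc x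
  obtain ⟨b, hb⟩ := hassoc y
  obtain ⟨σ, hσ, hab | hba⟩ := h a b
  · exact .inl (ha.dvd_iff_dvd_left.2 (hb.dvd_iff_dvd_right.2 (hdvd a b σ hσ hab)))
  · exact .inr (hb.dvd_iff_dvd_left.2 (ha.dvd_iff_dvd_right.2 (hdvd b a σ hσ hba)))

namespace IsSemilocalRing

variable {A B : Type*} [CommRing A] [CommRing B]

theorem exists_le_comap_of_isLocalHom (f : A →+* B) [IsLocalHom f] (hB : IsSemilocalRing B)
    {I : Ideal A} (hI : I ≠ ⊤) :
    ∃ m : Ideal B, m.IsMaximal ∧ I ≤ m.comap f := by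
  classical
  have hcover : (I : Set A) ⊆ ⋃ m ∈ (hB.toFinset : Set (Ideal B)), (m.comap f : Set A) := by
    intro a ha
    have : ¬IsUnit (f a) := fun hu => hI (I.eq_top_of_isUnit_mem ha (hu.of_map f a))
    obtain ⟨m, hm, hle⟩ := Ideal.exists_le_maximal _ (Ideal.span_singleton_ne_top this)
    exact Set.mem_biUnion (Finset.mem_coe.2 (hB.mem_toFinset.2 hm))
      (hle (Ideal.mem_span_singleton_self _))
  obtain ⟨m, hm, hle⟩ := (Ideal.subset_union_prime ⊥ ⊥
    fun m hm _ _ => (hB.mem_toFinset.1 hm).isPrime.comap f).1 hcover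
  exact ⟨m, hB.mem_toFinset.1 hm, hle⟩

theorem exists_comap_eq_of_isMaximal (f : A →+* B) [IsLocalHom f] (hB : IsSemilocalRing B)
    {m' : Ideal A} (hm' : m'.IsMaximal) : ∃ m : Ideal B, m.IsMaximal ∧ m.comap f = m' := by
  obtain ⟨m, hm, hle⟩ := hB.exists_le_comap_of_isLocalHom f hm'.ne_top
  exact ⟨m, hm, (hm'.eq_of_le (Ideal.comap_ne_top f hm.ne_top) hle).symm⟩

theorem of_isLocalHom (f : A →+* B) [IsLocalHom f] (hB : IsSemilocalRing B) : IsSemilocalRing A :=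
  (hB.image (Ideal.comap f)).subset fun _ hm' => hB.exists_comap_eq_of_isMaximal f hm'

end IsSemilocalRing

theorem Subfield.isLocalHom_subtype_comap {R L : Type*} [CommRing R] [Field L] (φ : R →+* L)
    (K' : Subfield L) : IsLocalHom (K'.toSubring.comap φ).subtype := by
  refine ⟨fun a ⟨u, hu⟩ => isUnit_iff_exists_inv.2 ⟨⟨↑u⁻¹, ?_⟩, Subtype.ext ?_⟩⟩
  · show φ ↑u⁻¹ ∈ K'
    rw [map_units_inv φ u, hu]
    exact K'.inv_mem a.2
  · simp [hu]

namespace IsPrueferDomain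

variable {R : Type*} [CommRing R] [IsDomain R] (K : Type*) [Field K] [Algebra R K]
  [IsFractionRing R K]

noncomputable def valuationSubring (hR : IsPrueferDomain R) (p : Ideal R) [p.IsPrime] :
    ValuationSubring K :=
  .ofSubring
    (Localization.subalgebra.ofField K p.primeCompl p.primeCompl_le_nonZeroDivisors).toSubring
    fun x => by
      have : ValuationRing (Localization.AtPrime p) := ValuationRing.iff_dvd_total.2 ⟨(hR.2 p).2⟩
      let L := Localization.subalgebra.ofField K p.primeCompl p.primeCompl_le_nonZeroDivisors
      have : ValuationRing L :=
        let e := IsLocalization.algEquiv p.primeCompl (Localization.AtPrime p) L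
        e.surjective.valuationRing e.toRingEquiv.toRingHom
      exact (ValuationRing.isInteger_or_isInteger L x).imp
        (fun ⟨a, ha⟩ => ha ▸ a.2) fun ⟨a, ha⟩ => ha ▸ a.2

variable {K}

theorem notMem_of_valuation_algebraMap_eq_one (hR : IsPrueferDomain R) {p : Ideal R}
    [p.IsPrime] {r : R} (h : (hR.valuationSubring K p).valuation (algebraMap R K r) = 1) :
    r ∉ p := by
  have hr0 : algebraMap R K r ≠ 0 := fun h0 => by simp [h0] at h
  have hinv : (algebraMap R K r)⁻¹ ∈ hR.valuationSubring K p := by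
    rw [← ValuationSubring.valuation_le_one_iff, map_inv₀, h, inv_one]
  obtain ⟨a, s, hs, has⟩ := hinv
  have hs0 : algebraMap R K s ≠ 0 :=
    IsFractionRing.to_map_ne_zero_of_mem_nonZeroDivisors (p.primeCompl_le_nonZeroDivisors hs)
  have hs' : s = r * a := by
    apply IsFractionRing.injective R K
    rw [eq_mul_inv_iff_mul_eq₀ hs0] at has
    rw [map_mul, ← has, ← mul_assoc, mul_inv_cancel₀ hr0, one_mul]
  exact fun hr => hs (hs' ▸ p.mul_mem_right a hr)

theorem mem_range_of_forall_mem (hR : IsPrueferDomain R) {x : K}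
    (h : ∀ v : MaximalSpectrum R, x ∈ hR.valuationSubring K v.asIdeal) :
    x ∈ (algebraMap R K).range := by
  have hx := Algebra.mem_iInf.2 h
  rw [MaximalSpectrum.iInf_localization_eq_bot R K, Algebra.mem_bot] at hx
  exact hx

theorem exists_denominator_mem_comap (hR : IsPrueferDomain R) (hS : IsSemilocalRing R)
    {K' : Subfield K} {x : K} (hx : x ∈ K') :
    ∃ σ ε : K'.toSubring.comap (algebraMap R K), (σ : R) ≠ 0 ∧
      x * algebraMap R K σ = algebraMap R K ε ∧
      ∀ v : MaximalSpectrum R, x ∈ hR.valuationSubring K v.asIdeal → (σ : R) ∉ v.asIdeal := by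
  have : Finite {m : Ideal R // m.IsMaximal} := hS.to_subtype
  have : Finite (MaximalSpectrum R) := .of_equiv _ (MaximalSpectrum.equivSubtype R).symm
  obtain ⟨s, hsK', hs0, hs⟩ := ValuationSubring.exists_denominator_of_finite
    (fun v : MaximalSpectrum R => hR.valuationSubring K v.asIdeal) K' hx
  obtain ⟨σ, rfl⟩ := hR.mem_range_of_forall_mem fun v => (hs v).1
  obtain ⟨ε, hε⟩ := hR.mem_range_of_forall_mem fun v => (hs v).2.1
  refine ⟨⟨σ, hsK'⟩, ⟨ε, show algebraMap R K ε ∈ K' from hε ▸ K'.mul_mem hsK' hx⟩,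
    fun h => hs0 (by rw [show σ = 0 from h, map_zero]),
    by rw [hε, mul_comm], fun v hv => hR.notMem_of_valuation_algebraMap_eq_one ((hs v).2.2 hv)⟩

theorem comap_subfield (hR : IsPrueferDomain R) (hS : IsSemilocalRing R) (K' : Subfield K) :
    IsPrueferDomain (K'.toSubring.comap (algebraMap R K)) := by
  have : IsLocalHom (K'.toSubring.comap (algebraMap R K)).subtype := K'.isLocalHom_subtype_comap _
  refine ⟨inferInstance, fun p' hp' =>
    ⟨inferInstance, Localization.AtPrime.dvd_total_of_forall_exists p' ?_⟩⟩
  obtain ⟨m, hm, hp'm⟩ := hS.exists_le_comap_of_isLocalHom (Subring.subtype _) hp'.ne_top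
  have := hm.isPrime
  have key : ∀ a b : K'.toSubring.comap (algebraMap R K), (a : R) ≠ 0 →
      algebraMap R K b / algebraMap R K a ∈ hR.valuationSubring K m → ∃ σ ∉ p', a ∣ σ * b := by
    intro a b ha hab
    obtain ⟨σ, ε, -, hσε, hσ⟩ := hR.exists_denominator_mem_comap hS (K'.div_mem b.2 a.2)
    refine ⟨σ, fun h => hσ ⟨m, hm⟩ hab (hp'm h), ε, Subtype.ext (IsFractionRing.injective R K ?_)⟩
    have ha' : algebraMap R K a ≠ 0 := (map_ne_zero_iff _ (IsFractionRing.injective R K)).2 ha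
    simp only [Subring.coe_mul, map_mul, ← hσε]
    field_simp
  have hone : (1 : K'.toSubring.comap (algebraMap R K)) ∉ p' := (p'.ne_top_iff_one).1 hp'.ne_top
  intro a b
  by_cases ha : (a : R) = 0
  · exact ⟨1, hone, .inr (by rw [show a = 0 from Subtype.ext ha, mul_zero]; exact dvd_zero b)⟩
  by_cases hb : (b : R) = 0
  · exact ⟨1, hone, .inl (by rw [show b = 0 from Subtype.ext hb, mul_zero]; exact dvd_zero a)⟩
  rcases (hR.valuationSubring K m).mem_or_inv_mem (algebraMap R K b / algebraMap R K a) with h | h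
  · obtain ⟨σ, hσ, hdvd⟩ := key a b ha h
    exact ⟨σ, hσ, .inl hdvd⟩
  · rw [inv_div] at h
    obtain ⟨σ, hσ, hdvd⟩ := key b a hb h
    exact ⟨σ, hσ, .inr hdvd⟩

end IsPrueferDomain

/-- Let `R` be a semilocal Prüfer domain with fraction field `K`, let
`K' ⊆ K` be a subfield and let `R' = R ∩ K'` (realised as the subring of `R` of elements
mapping into `K'`, which is isomorphic to the intersection inside `K` since `R → K` is
injective). Then `R'` is a semilocal Prüfer domain with fraction field `K'`, and every
maximal ideal of `R'` is the contraction of a maximal ideal of `R`. -/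
theorem semilocal_prufer_inter_subfield (R : Type*) [CommRing R] [IsDomain R]
    (hPrufer : IsPrueferDomain R) (hSemilocal : IsSemilocalRing R)
    (K' : Subfield (FractionRing R)) :
    letI R' : Subring R := K'.toSubring.comap (algebraMap R (FractionRing R))
    IsPrueferDomain R' ∧
    IsSemilocalRing R' ∧
    (∀ x : FractionRing R, x ∈ K' → ∃ a b : R', (b : R) ≠ 0 ∧
      x * algebraMap R (FractionRing R) (b : R) = algebraMap R (FractionRing R) (a : R)) ∧
    (∀ m' : Ideal R', m'.IsMaximal →
      ∃ m : Ideal R, m.IsMaximal ∧ Ideal.comap R'.subtype m = m') := by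
  have : IsLocalHom (K'.toSubring.comap (algebraMap R (FractionRing R))).subtype :=
    K'.isLocalHom_subtype_comap _
  refine ⟨hPrufer.comap_subfield hSemilocal K', hSemilocal.of_isLocalHom (Subring.subtype _),
    fun x hx => ?_, fun m' hm' => hSemilocal.exists_comap_eq_of_isMaximal _ hm'⟩
  obtain ⟨σ, ε, hσ, hxσ, -⟩ := hPrufer.exists_denominator_mem_comap hSemilocal hx
  exact ⟨ε, σ, hσ, hxσ⟩
end

section
/- Let R₁ be a semilocal Prüfer domain, let m be a maximal ideal of R₁ with residue field k = R₁/m, and let φ : R₁ → k be the quotient map. Let R₂ ⊆ k be a subring which is a semilocal Prüfer domain whose fraction field is k (i.e. every element of k is a quotient of elements of R₂). Define R := φ⁻¹(R₂) = R₁ ×_k R₂ and let p := ker(R → R₁/m) ∩ R be the contraction of m to R (i.e. p = φ⁻¹(0) viewed in R). Then R is a semilocal Prüfer domain, p is a prime ideal of R, and φ induces a ring isomorphism R/p ≅ R₂ (so the residue field of R at p is k). -/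
/-!
Let `f : R → R₂` be the restriction of `φ`; it is surjective with kernel `p`, which gives
`R/p ≅ R₂` and the primality of `p`. A prime `q` of `R` either contains `p`, and is then `f⁻¹(Q)`
for a prime `Q` of `R₂`, so that `R_q` is the preimage of the valuation ring `(R₂)_Q` of `k` in
the valuation ring `(R₁)_m`, hence a valuation ring; or `q` misses some `t ∈ p`, and since
`t R₁ ⊆ m ⊆ R` the rings `R` and `R₁` agree after inverting `t`, so `q` is contracted from a prime
of `R₁` with the same localisation. The same dichotomy shows that every maximal ideal of `R` is
contracted from one of `R₁` or `R₂`.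
-/

/-- `A_q` is a valuation ring, phrased inside `A`: of any two fractions `y / x` and `x / y`,
one can be written as `r / s` with `s ∉ q`. -/
def IsValuationAt {A : Type*} [CommRing A] (q : Ideal A) : Prop :=
  ∀ x y : A, ∃ r s : A, s ∉ q ∧ (y * s = x * r ∨ x * s = y * r)

section Localization

variable {A : Type*} [CommRing A] (q : Ideal A) [q.IsPrime]

theorem algebraMap_atPrime_dvd_iff {x y : A} :
    algebraMap A (Localization.AtPrime q) x ∣ algebraMap A (Localization.AtPrime q) y ↔
      ∃ r s : A, s ∉ q ∧ y * s = x * r := by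
  constructor
  · rintro ⟨c, hc⟩
    obtain ⟨⟨r, s⟩, rfl⟩ := IsLocalization.mk'_surjective q.primeCompl c
    have : algebraMap A (Localization.AtPrime q) (y * s) =
        algebraMap A (Localization.AtPrime q) (x * r) := by
      rw [map_mul, map_mul, hc, mul_assoc, IsLocalization.mk'_spec]
    obtain ⟨u, hu⟩ := (IsLocalization.eq_iff_exists q.primeCompl _).mp this
    exact ⟨u * r, u * s, q.primeCompl.mul_mem u.2 s.2, by linear_combination hu⟩
  · rintro ⟨r, s, hs, hrs⟩
    obtain ⟨v, hv⟩ := IsLocalization.map_units (Localization.AtPrime q) (⟨s, hs⟩ : q.primeCompl)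
    refine ⟨algebraMap A _ r * ↑v⁻¹, ?_⟩
    rw [← mul_one (algebraMap A _ y), ← v.mul_inv, hv]
    simp only [← mul_assoc, ← map_mul, hrs]

theorem associated_mk'_algebraMap (x : A) (s : q.primeCompl) :
    Associated (IsLocalization.mk' (Localization.AtPrime q) x s)
      (algebraMap A (Localization.AtPrime q) x) :=
  ⟨(IsLocalization.map_units _ s).unit, IsLocalization.mk'_spec _ x s⟩

theorem isValuationAt_iff_algebraMap_dvd_total :
    IsValuationAt q ↔ ∀ x y : A, algebraMap A (Localization.AtPrime q) x ∣ algebraMap A _ y ∨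
      algebraMap A (Localization.AtPrime q) y ∣ algebraMap A _ x := by
  simp only [algebraMap_atPrime_dvd_iff]
  refine forall₂_congr fun x y => ⟨?_, ?_⟩
  · rintro ⟨r, s, hs, h | h⟩
    exacts [.inl ⟨r, s, hs, h⟩, .inr ⟨r, s, hs, h⟩]
  · rintro (⟨r, s, hs, h⟩ | ⟨r, s, hs, h⟩)
    exacts [⟨r, s, hs, .inl h⟩, ⟨r, s, hs, .inr h⟩]

theorem isValuationAt_iff_dvd_total :
    IsValuationAt q ↔ ∀ a b : Localization.AtPrime q, a ∣ b ∨ b ∣ a := by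
  rw [isValuationAt_iff_algebraMap_dvd_total]
  refine ⟨fun h a b => ?_, fun h x y => h _ _⟩
  obtain ⟨⟨x, s⟩, rfl⟩ := IsLocalization.mk'_surjective q.primeCompl a
  obtain ⟨⟨y, t⟩, rfl⟩ := IsLocalization.mk'_surjective q.primeCompl b
  simpa only [(associated_mk'_algebraMap q x s).dvd_iff_dvd_left,
    (associated_mk'_algebraMap q x s).dvd_iff_dvd_right,
    (associated_mk'_algebraMap q y t).dvd_iff_dvd_left,
    (associated_mk'_algebraMap q y t).dvd_iff_dvd_right] using h x y

end Localization

theorem isPrueferDomain_iff {A : Type*} [CommRing A] [IsDomain A] :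
    IsPrueferDomain A ↔ ∀ q : Ideal A, q.IsPrime → IsValuationAt q := by
  constructor
  · rintro ⟨-, h⟩ q _
    exact (isValuationAt_iff_dvd_total q).2 (h q).2
  · intro h
    exact ⟨‹_›, fun q hq => ⟨IsLocalization.isDomain_of_local_atPrime hq,
      (isValuationAt_iff_dvd_total q).1 (h q hq)⟩⟩

section Conductor

variable {A : Type*} [CommRing A] {S : Subring A} {t : S}

theorem Subring.exists_isPrime_comap_eq (ht : ∀ a : A, a * t ∈ S) (q : Ideal S) [hq : q.IsPrime]
    (htq : t ∉ q) : ∃ Q : Ideal A, Q.IsPrime ∧ Q.comap S.subtype = q := by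
  have mem_of_mul_mem {a b : S} (hb : b ∈ q) (hab : (b : A) = a * t) : a ∈ q := by
    rw [show b = a * t from Subtype.ext hab] at hb
    exact (hq.mem_or_mem hb).resolve_right htq
  refine ⟨{ carrier := {a | ∃ b ∈ q, (b : A) = a * t}
            zero_mem' := ⟨0, q.zero_mem, by simp⟩
            add_mem' := ?_
            smul_mem' := ?_ }, ⟨?_, ?_⟩, ?_⟩
  · rintro a₁ a₂ ⟨b₁, hb₁, e₁⟩ ⟨b₂, hb₂, e₂⟩
    exact ⟨b₁ + b₂, q.add_mem hb₁ hb₂, by push_cast [e₁, e₂]; ring⟩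
  · rintro c a ⟨b, hb, e⟩
    refine ⟨⟨c * a * t, ht _⟩, mem_of_mul_mem (q.mul_mem_left ⟨c * t, ht c⟩ hb) ?_, rfl⟩
    push_cast [e]; ring
  · rw [Ne, Ideal.eq_top_iff_one]
    rintro ⟨b, hb, e⟩
    exact htq (Subtype.ext (e.trans (one_mul _)) ▸ hb)
  · rintro a₁ a₂ ⟨b, hb, e⟩
    have : (⟨a₁ * t, ht a₁⟩ * ⟨a₂ * t, ht a₂⟩ : S) = b * t := Subtype.ext (by push_cast [e]; ring)
    replace := this ▸ q.mul_mem_right t hb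
    exact (hq.mem_or_mem this).imp (⟨_, ·, rfl⟩) (⟨_, ·, rfl⟩)
  · ext a
    exact ⟨fun ⟨b, hb, e⟩ => mem_of_mul_mem hb e, fun ha => ⟨a * t, q.mul_mem_right t ha, rfl⟩⟩

theorem Subring.exists_isMaximal_comap_eq (ht : ∀ a : A, a * t ∈ S) {q : Ideal S} [q.IsMaximal]
    (htq : t ∉ q) : ∃ n : Ideal A, n.IsMaximal ∧ n.comap S.subtype = q := by
  obtain ⟨Q, hQ, hQq⟩ := S.exists_isPrime_comap_eq ht q htq
  obtain ⟨n, hn, hQn⟩ := Q.exists_le_maximal hQ.ne_top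
  exact ⟨n, hn, (Ideal.IsMaximal.eq_of_le ‹_› (Ideal.comap_ne_top _ hn.ne_top)
    (hQq ▸ Ideal.comap_mono hQn)).symm⟩

theorem IsValuationAt.comap_subtype {Q : Ideal A} [hQ : Q.IsPrime] (hval : IsValuationAt Q)
    (ht : ∀ a : A, a * t ∈ S) (htQ : (t : A) ∉ Q) : IsValuationAt (Q.comap S.subtype) := by
  intro x y
  obtain ⟨r, s, hs, h⟩ := hval x y
  refine ⟨⟨r * t, ht r⟩, ⟨s * t, ht s⟩, fun hst => (hQ.mem_or_mem hst).elim hs htQ, ?_⟩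
  rcases h with h | h
  exacts [.inl (Subtype.ext (by push_cast; linear_combination (t : A) * h)),
    .inr (Subtype.ext (by push_cast; linear_combination (t : A) * h))]

end Conductor

section Preimage

variable {A B : Type*} [CommRing A] [CommRing B]

def Subring.comapRestrict (φ : A →+* B) (T : Subring B) : T.comap φ →+* T :=
  φ.restrict (T.comap φ) T fun _ h => h

variable {φ : A →+* B} (T : Subring B)

@[simp]
theorem Subring.coe_comapRestrict (x : T.comap φ) : (T.comapRestrict φ x : B) = φ x :=
  rfl

theorem Subring.comapRestrict_surjective (hφ : Function.Surjective φ) :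
    Function.Surjective (T.comapRestrict φ) := by
  intro y
  obtain ⟨x, hx⟩ := hφ y
  exact ⟨⟨x, show φ x ∈ T from hx ▸ y.2⟩, Subtype.ext hx⟩

theorem Subring.ker_comapRestrict :
    RingHom.ker (T.comapRestrict φ) = (RingHom.ker φ).comap (T.comap φ).subtype := by
  ext x
  simp [RingHom.mem_ker, ← Subtype.val_inj]

theorem Subring.ker_comapRestrict_quotientMk {m : Ideal A} (T : Subring (A ⧸ m)) :
    RingHom.ker (T.comapRestrict (Ideal.Quotient.mk m)) =
      m.comap (T.comap (Ideal.Quotient.mk m)).subtype := by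
  rw [T.ker_comapRestrict, Ideal.mk_ker]

theorem Subring.mem_comap_of_mem_ker {a : A} (ha : a ∈ RingHom.ker φ) : a ∈ T.comap φ := by
  simp [Subring.mem_comap, RingHom.mem_ker.mp ha, T.zero_mem]

theorem isSemilocalRing_subring_comap (hφ : Function.Surjective φ) (hA : IsSemilocalRing A)
    (hT : IsSemilocalRing T) : IsSemilocalRing (T.comap φ) := by
  set f := T.comapRestrict φ
  refine ((hA.image (Ideal.comap (T.comap φ).subtype)).union (hT.image (Ideal.comap f))).subset ?_
  intro q (_ : q.IsMaximal)
  by_cases hker : RingHom.ker f ≤ q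
  · right
    refine ⟨q.map f, Ideal.IsMaximal.map_of_surjective_of_ker_le
      (T.comapRestrict_surjective hφ) hker, ?_⟩
    rw [Ideal.comap_map_of_surjective' _ (T.comapRestrict_surjective hφ), sup_eq_left.mpr hker]
  · left
    obtain ⟨t, htf, htq⟩ := SetLike.not_le_iff_exists.mp hker
    rw [T.ker_comapRestrict] at htf
    exact (T.comap φ).exists_isMaximal_comap_eq
      (fun a => T.mem_comap_of_mem_ker (Ideal.mul_mem_left _ a htf)) htq

end Preimage

theorem IsValuationAt.exists_mul_eq_mul_of_denominators {K : Type*} [CommRing K] [IsDomain K]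
    {T : Subring K} (hT : ∀ x : K, ∃ a b : T, (b : K) ≠ 0 ∧ x * b = a) {Q : Ideal T}
    (hQ : IsValuationAt Q) (a b : K) :
    ∃ ρ σ : T, σ ∉ Q ∧ (b * σ = a * ρ ∨ a * σ = b * ρ) := by
  obtain ⟨a₁, a₂, ha₂, ha⟩ := hT a
  obtain ⟨b₁, b₂, hb₂, hb⟩ := hT b
  obtain ⟨ρ, σ, hσ, h⟩ := hQ (a₁ * b₂) (b₁ * a₂)
  have hden : (a₂ : K) * b₂ ≠ 0 := mul_ne_zero ha₂ hb₂
  refine ⟨ρ, σ, hσ, h.imp (fun h => mul_right_cancel₀ hden ?_) (fun h => mul_right_cancel₀ hden ?_)⟩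
  · have := congrArg ((↑) : T → K) h
    push_cast at this
    linear_combination this + (σ : K) * a₂ * hb - (ρ : K) * b₂ * ha
  · have := congrArg ((↑) : T → K) h
    push_cast at this
    linear_combination this + (σ : K) * b₂ * ha - (ρ : K) * a₂ * hb

/-- If `y / x = r₁ / s₁` lies in `A_m` and its residue is `α / β` with `β ∉ q`, then `y / x`
lies in `S_q`. -/
theorem exists_mul_eq_mul_of_residue {A : Type*} [CommRing A] {m : Ideal A} [hm : m.IsMaximal]
    {S : Subring A} (hmS : ∀ a ∈ m, a ∈ S) {q : Ideal S} [hq : q.IsPrime]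
    (hmq : m.comap S.subtype ≤ q) {x y α β : S} {r₁ s₁ : A} (hs₁ : s₁ ∉ m)
    (hxy : y * s₁ = x * r₁) (hβ : β ∉ q) (hαβ : r₁ * β - α * s₁ ∈ m) :
    ∃ r s : S, s ∉ q ∧ y * s = x * r := by
  obtain ⟨u, i, hi, hui⟩ := hm.exists_inv hs₁
  have hiq : (⟨i, hmS i hi⟩ : S) ∈ q := hmq hi
  have hw : 1 - ⟨i, hmS i hi⟩ ∉ q := fun hw =>
    hq.ne_top ((Ideal.eq_top_iff_one _).mpr (by simpa using q.add_mem hw hiq))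
  -- `r / s` is `r₁ / s₁` written over the denominator `(1 - i) β = u s₁ β`.
  refine ⟨α * (1 - ⟨i, hmS i hi⟩) + ⟨(r₁ * β - α * s₁) * u, hmS _ (m.mul_mem_right u hαβ)⟩,
    (1 - ⟨i, hmS i hi⟩) * β, fun hs => (hq.mem_or_mem hs).elim hw hβ, Subtype.ext ?_⟩
  push_cast
  linear_combination (u * β) * hxy - (y * β - x * α : A) * hui

theorem IsValuationAt.comap_comapRestrict {A : Type*} [CommRing A] {m : Ideal A} [m.IsMaximal]
    (hm : IsValuationAt m) {T : Subring (A ⧸ m)}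
    (hT : ∀ x : A ⧸ m, ∃ a b : T, (b : A ⧸ m) ≠ 0 ∧ x * b = a) {Q : Ideal T} [Q.IsPrime]
    (hQ : IsValuationAt Q) :
    IsValuationAt (Q.comap (T.comapRestrict (Ideal.Quotient.mk m))) := by
  set S := T.comap (Ideal.Quotient.mk m)
  set f := T.comapRestrict (Ideal.Quotient.mk m)
  have hmS (a : A) (ha : a ∈ m) : a ∈ S := T.mem_comap_of_mem_ker (by rwa [Ideal.mk_ker])
  have hmq : m.comap S.subtype ≤ Q.comap f := by
    rw [← T.ker_comapRestrict_quotientMk]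
    exact Ideal.comap_mono bot_le
  have residue {a b : A} {α β : S} (h : Ideal.Quotient.mk m b * f β = Ideal.Quotient.mk m a * f α) :
      b * β - α * a ∈ m :=
    Ideal.Quotient.eq.mp (by simpa [f, mul_comm] using h)
  have key (x y : S) (r₁ s₁ : A) (hs₁ : s₁ ∉ m) (hxy : y * s₁ = x * r₁) :
      ∃ r s : S, s ∉ Q.comap f ∧ (y * s = x * r ∨ x * s = y * r) := by
    by_cases hr₁ : r₁ ∈ m
    · obtain ⟨r, s, hs, h⟩ := exists_mul_eq_mul_of_residue (α := 0) hmS hmq hs₁ hxy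
        (Ideal.IsPrime.one_notMem inferInstance) (by simpa using hr₁)
      exact ⟨r, s, hs, .inl h⟩
    obtain ⟨ρ, σ, hσ, h⟩ := hQ.exists_mul_eq_mul_of_denominators hT
      (Ideal.Quotient.mk m s₁) (Ideal.Quotient.mk m r₁)
    obtain ⟨α, rfl⟩ := T.comapRestrict_surjective Ideal.Quotient.mk_surjective ρ
    obtain ⟨β, rfl⟩ := T.comapRestrict_surjective Ideal.Quotient.mk_surjective σ
    rcases h with h | h
    · obtain ⟨r, s, hs, h⟩ := exists_mul_eq_mul_of_residue hmS hmq hs₁ hxy hσ (residue h)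
      exact ⟨r, s, hs, .inl h⟩
    · obtain ⟨r, s, hs, h⟩ := exists_mul_eq_mul_of_residue hmS hmq hr₁ hxy.symm hσ (residue h)
      exact ⟨r, s, hs, .inr h⟩
  intro x y
  obtain ⟨r₁, s₁, hs₁, h | h⟩ := hm x y
  · exact key x y r₁ s₁ hs₁ h
  · obtain ⟨r, s, hs, h⟩ := key y x r₁ s₁ hs₁ h
    exact ⟨r, s, hs, h.symm⟩

theorem isPrueferDomain_subring_comap_quotientMk {A : Type*} [CommRing A] [IsDomain A]
    (hA : IsPrueferDomain A) {m : Ideal A} [m.IsMaximal] {T : Subring (A ⧸ m)}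
    (hT : IsPrueferDomain T) (hfrac : ∀ x : A ⧸ m, ∃ a b : T, (b : A ⧸ m) ≠ 0 ∧ x * b = a) :
    IsPrueferDomain (T.comap (Ideal.Quotient.mk m)) := by
  have := hT.1
  rw [isPrueferDomain_iff] at hA hT ⊢
  set f := T.comapRestrict (Ideal.Quotient.mk m)
  have hf : Function.Surjective f := T.comapRestrict_surjective Ideal.Quotient.mk_surjective
  intro q hq
  by_cases hker : RingHom.ker f ≤ q
  · have := Ideal.map_isPrime_of_surjective hf hker
    rw [← sup_eq_left.mpr hker, ← Ideal.comap_map_of_surjective' f hf]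
    exact (hA m inferInstance).comap_comapRestrict hfrac (hT _ this)
  · obtain ⟨t, htm, htq⟩ := SetLike.not_le_iff_exists.mp hker
    rw [T.ker_comapRestrict_quotientMk] at htm
    have ht (a : A) : a * t ∈ T.comap (Ideal.Quotient.mk m) :=
      T.mem_comap_of_mem_ker (by rw [Ideal.mk_ker]; exact m.mul_mem_left a htm)
    obtain ⟨Q, hQ, rfl⟩ := Subring.exists_isPrime_comap_eq ht q htq
    exact (hA Q hQ).comap_subtype ht htq

/-- Gluing a semilocal Prüfer domain `R₁` along the residue field
`k = R₁/m` at a maximal ideal `m` with a semilocal Prüfer domain `R₂ ⊆ k` whose fraction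
field is `k`: the fibre product `R = R₁ ×ₖ R₂ = φ⁻¹(R₂)` is a semilocal Prüfer domain,
the contraction `p` of `m` to `R` is prime, and `φ` induces an isomorphism `R/p ≅ R₂`. -/
theorem glue_semilocal_prufer (R₁ : Type*) [CommRing R₁] [IsDomain R₁]
    (hPrufer₁ : IsPrueferDomain R₁) (hSemilocal₁ : IsSemilocalRing R₁)
    (m : Ideal R₁) (hm : m.IsMaximal)
    (R₂ : Subring (R₁ ⧸ m))
    (hPrufer₂ : IsPrueferDomain R₂) (hSemilocal₂ : IsSemilocalRing R₂)
    (hFrac₂ : ∀ x : R₁ ⧸ m, ∃ a b : R₂, (b : R₁ ⧸ m) ≠ 0 ∧ x * (b : R₁ ⧸ m) = (a : R₁ ⧸ m)) :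
    letI R : Subring R₁ := R₂.comap (Ideal.Quotient.mk m)
    letI p : Ideal R := Ideal.comap R.subtype m
    IsPrueferDomain R ∧ IsSemilocalRing R ∧ p.IsPrime ∧
      ∃ e : (R ⧸ p) ≃+* R₂,
        ∀ x : R, (e (Ideal.Quotient.mk p x) : R₁ ⧸ m) = Ideal.Quotient.mk m (x : R₁) := by
  have := hPrufer₂.1
  have hf := R₂.comapRestrict_surjective (Ideal.Quotient.mk_surjective (I := m))
  have hker := R₂.ker_comapRestrict_quotientMk
  refine ⟨isPrueferDomain_subring_comap_quotientMk hPrufer₁ hPrufer₂ hFrac₂,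
    isSemilocalRing_subring_comap R₂ Ideal.Quotient.mk_surjective hSemilocal₁ hSemilocal₂,
    hker ▸ RingHom.ker_isPrime _,
    (Ideal.quotEquivOfEq hker.symm).trans (RingHom.quotientKerEquivOfSurjective hf), fun x => rfl⟩
end

section
/- Let V be a valuation ring with maximal ideal m and fraction field F, let n ≥ 1, let A := V[x₁,…,xₙ] be the polynomial ring, and let p ⊂ A be the prime ideal consisting of all polynomials whose coefficients all lie in m (equivalently, p = mA). Then: (1) the localisation A_p is a valuation ring; (2) the structure homomorphism V → A_p is injective and faithfully flat; and (3) the induced morphism of value groups Frac(V)ˣ/Vˣ → Frac(A)ˣ/(A_p)ˣ is an isomorphism, i.e. for every nonzero t in the fraction field of A there exists a nonzero u in F such that t/u is a unit of A_p, and a nonzero u ∈ F is a unit of A_p only if u is a unit of V. -/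
open MvPolynomial IsLocalRing

theorem ValuationRing.exists_dvd_forall_mem {R : Type*} [Monoid R] [PreValuationRing R]
    {s : Finset R} (hs : s.Nonempty) : ∃ a ∈ s, ∀ b ∈ s, a ∣ b := by
  induction hs using Finset.Nonempty.cons_induction with
  | singleton x => exact ⟨x, by simp⟩
  | cons x s hx _ ih =>
    obtain ⟨a, ha, hdvd⟩ := ih
    rcases dvd_total a x with hax | hxa
    · exact ⟨a, Finset.mem_cons_of_mem ha, (Finset.forall_mem_cons hx _).2 ⟨hax, hdvd⟩⟩
    · exact ⟨x, Finset.mem_cons_self x s,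
        (Finset.forall_mem_cons hx _).2 ⟨dvd_rfl, fun b hb => hxa.trans (hdvd b hb)⟩⟩

instance MvPolynomial.isPrime_map_C {R σ : Type*} [CommRing R] (P : Ideal R) [P.IsPrime] :
    (P.map (C : R →+* MvPolynomial σ R)).IsPrime := by
  rw [← Ideal.mk_ker (I := P), ← ker_map]
  exact RingHom.ker_isPrime _

theorem MvPolynomial.isUnit_of_C_mul_notMem_map_maximalIdeal {R σ : Type*} [CommRing R]
    [IsLocalRing R] {u : R} {c : MvPolynomial σ R}
    (h : C u * c ∉ (maximalIdeal R).map C) : IsUnit u := by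
  by_contra hu
  exact h (Ideal.mul_mem_right _ _ (Ideal.mem_map_of_mem _ ((mem_maximalIdeal u).2 hu)))

namespace MvPolynomial

variable {V σ : Type*} [CommRing V] [IsDomain V] [ValuationRing V]

theorem exists_eq_C_mul_notMem_map_maximalIdeal (f : MvPolynomial σ V) :
    ∃ (v : V) (b : MvPolynomial σ V), b ∉ (maximalIdeal V).map C ∧ f = C v * b := by
  classical
  rcases eq_or_ne f 0 with rfl | hf
  · exact ⟨0, 1, (isPrime_map_C _).one_notMem, by simp⟩
  obtain ⟨a, ha, hdvd⟩ := ValuationRing.exists_dvd_forall_mem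
    ((support_nonempty.2 hf).image f.coeff)
  obtain ⟨i, hi, rfl⟩ := Finset.mem_image.1 ha
  obtain ⟨b, hfb⟩ : C (f.coeff i) ∣ f := by
    refine (C_dvd_iff_dvd_coeff _ _).2 fun j => ?_
    by_cases hj : j ∈ f.support
    · exact hdvd _ (Finset.mem_image_of_mem _ hj)
    · rw [notMem_support_iff.1 hj]
      exact dvd_zero _
  have hbi : b.coeff i = 1 := by
    apply mul_left_cancel₀ (mem_support_iff.1 hi)
    rw [← coeff_C_mul, ← hfb, mul_one]
  refine ⟨_, b, fun hb => ?_, hfb⟩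
  exact (mem_maximalIdeal _).1 (hbi ▸ mem_map_C_iff.1 hb i) isUnit_one

theorem associated_of_C_mul_eq_C_mul {v w : V} {b c : MvPolynomial σ V} (hv : v ≠ 0) (hw : w ≠ 0)
    (hb : b ∉ (maximalIdeal V).map C) (hc : c ∉ (maximalIdeal V).map C)
    (h : C v * b = C w * c) : Associated v w := by
  wlog hvw : v ∣ w generalizing v w b c
  · exact (this hw hv hc hb h.symm ((ValuationRing.dvd_total v w).resolve_left hvw)).symm
  obtain ⟨u, rfl⟩ := hvw
  have hbu : b = C u * c := by
    apply mul_left_cancel₀ (C_ne_zero.2 hv : (C v : MvPolynomial σ V) ≠ 0)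
    rw [h, map_mul, mul_assoc]
  exact associated_mul_unit_right v u (isUnit_of_C_mul_notMem_map_maximalIdeal (hbu ▸ hb))

theorem exists_associated_algebraMap
    (x : Localization.AtPrime ((maximalIdeal V).map (C : V →+* MvPolynomial σ V))) :
    ∃ v : V, Associated (algebraMap V _ v) x := by
  obtain ⟨⟨f, s⟩, rfl⟩ := IsLocalization.mk'_surjective
    ((maximalIdeal V).map (C : V →+* MvPolynomial σ V)).primeCompl x
  obtain ⟨v, b, hb, rfl⟩ := exists_eq_C_mul_notMem_map_maximalIdeal f
  refine ⟨v, ((IsLocalization.AtPrime.isUnit_mk'_iff _ _ b s).2 hb).unit, ?_⟩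
  rw [IsUnit.unit_spec, IsScalarTower.algebraMap_apply V (MvPolynomial σ V)]
  exact IsLocalization.mul_mk'_eq_mk'_of_mul _ _ _

theorem isValuationDomain_localization_atPrime_map_maximalIdeal :
    IsValuationDomain
      (Localization.AtPrime ((maximalIdeal V).map (C : V →+* MvPolynomial σ V))) := by
  refine ⟨inferInstance, fun x y => ?_⟩
  obtain ⟨v, hv⟩ := exists_associated_algebraMap x
  obtain ⟨w, hw⟩ := exists_associated_algebraMap y
  rw [← hv.dvd_iff_dvd_left, ← hw.dvd_iff_dvd_right, ← hw.dvd_iff_dvd_left,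
    ← hv.dvd_iff_dvd_right]
  exact (ValuationRing.dvd_total v w).imp (map_dvd _) (map_dvd _)

theorem algebraMap_localization_atPrime_map_maximalIdeal_injective :
    Function.Injective (algebraMap V
      (Localization.AtPrime ((maximalIdeal V).map (C : V →+* MvPolynomial σ V)))) := by
  rw [IsScalarTower.algebraMap_eq V (MvPolynomial σ V), RingHom.coe_comp]
  exact (IsLocalization.injective _
    (Ideal.primeCompl_le_nonZeroDivisors ((maximalIdeal V).map C))).comp (C_injective σ V)

instance isLocalHom_algebraMap_localization_atPrime_map_maximalIdeal :
    IsLocalHom (algebraMap V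
      (Localization.AtPrime ((maximalIdeal V).map (C : V →+* MvPolynomial σ V)))) :=
  ⟨fun v hv => isUnit_of_C_mul_notMem_map_maximalIdeal (c := 1) (by
    rw [mul_one]
    exact (IsLocalization.AtPrime.isUnit_to_map_iff _ _ (C (σ := σ) v)).1 hv)⟩

theorem faithfullyFlat_localization_atPrime_map_maximalIdeal :
    Module.FaithfullyFlat V
      (Localization.AtPrime ((maximalIdeal V).map (C : V →+* MvPolynomial σ V))) :=
  have := Module.Flat.trans V (MvPolynomial σ V)
    (Localization.AtPrime ((maximalIdeal V).map (C : V →+* MvPolynomial σ V)))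
  .of_flat_of_isLocalHom

end MvPolynomial

theorem polynomial_generic_point_valuation_ring_general
    (V : Type*) [CommRing V] [IsDomain V] [ValuationRing V]
    (n : ℕ) :
    letI A := MvPolynomial (Fin n) V
    letI p : Ideal A := (IsLocalRing.maximalIdeal V).map MvPolynomial.C
    ∃ hp : p.IsPrime,
      (letI := hp
       IsValuationDomain (Localization.AtPrime p) ∧
       Function.Injective
         ((algebraMap A (Localization.AtPrime p)).comp (algebraMap V A)) ∧
       (letI : Algebra V (Localization.AtPrime p) :=
          ((algebraMap A (Localization.AtPrime p)).comp (algebraMap V A)).toAlgebra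
        Module.FaithfullyFlat V (Localization.AtPrime p))) ∧
      (∀ f g : A, f ≠ 0 → g ≠ 0 →
        ∃ (v w : V) (b c : A), v ≠ 0 ∧ w ≠ 0 ∧ b ∉ p ∧ c ∉ p ∧
          f * MvPolynomial.C w * b = g * MvPolynomial.C v * c) ∧
      (∀ v w : V, v ≠ 0 → w ≠ 0 →
        (∃ b c : A, b ∉ p ∧ c ∉ p ∧ MvPolynomial.C v * b = MvPolynomial.C w * c) →
        (v ∣ w ∧ w ∣ v)) := by
  refine ⟨inferInstance, ⟨isValuationDomain_localization_atPrime_map_maximalIdeal,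
    algebraMap_localization_atPrime_map_maximalIdeal_injective,
    faithfullyFlat_localization_atPrime_map_maximalIdeal⟩, ?_, ?_⟩
  · intro f g hf hg
    obtain ⟨v, b, hb, rfl⟩ := exists_eq_C_mul_notMem_map_maximalIdeal f
    obtain ⟨w, c, hc, rfl⟩ := exists_eq_C_mul_notMem_map_maximalIdeal g
    exact ⟨v, w, c, b, fun hv => hf (by simp [hv]), fun hw => hg (by simp [hw]), hc, hb, by ring⟩
  · rintro v w hv hw ⟨b, c, hb, hc, h⟩
    exact (associated_of_C_mul_eq_C_mul hv hw hb hc h).dvd_dvd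

/-- Let `V` be a valuation ring with maximal ideal `m` and fraction
field `F`, let `n ≥ 1`, `A = V[x₁,…,xₙ]` and `p = mA` (the prime of polynomials all of
whose coefficients lie in `m`).  Then `A_p` is a valuation ring, `V → A_p` is injective
and faithfully flat, and the induced map of value groups
`Frac(V)ˣ/Vˣ → Frac(A)ˣ/(A_p)ˣ` is an isomorphism: every nonzero `t = f/g` in `Frac A`
differs from some nonzero `u = v/w` in `F` by a unit of `A_p`, and a nonzero `u = v/w`
in `F` is a unit of `A_p` only if it is a unit of `V`. -/
theorem polynomial_generic_point_valuation_ring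
    (V : Type*) [CommRing V] [IsDomain V] [ValuationRing V]
    (n : ℕ) (hn : 1 ≤ n) :
    letI A := MvPolynomial (Fin n) V
    letI p : Ideal A := (IsLocalRing.maximalIdeal V).map MvPolynomial.C
    ∃ hp : p.IsPrime,
      (letI := hp
       IsValuationDomain (Localization.AtPrime p) ∧
       Function.Injective
         ((algebraMap A (Localization.AtPrime p)).comp (algebraMap V A)) ∧
       (letI : Algebra V (Localization.AtPrime p) :=
          ((algebraMap A (Localization.AtPrime p)).comp (algebraMap V A)).toAlgebra
        Module.FaithfullyFlat V (Localization.AtPrime p))) ∧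
      (∀ f g : A, f ≠ 0 → g ≠ 0 →
        ∃ (v w : V) (b c : A), v ≠ 0 ∧ w ≠ 0 ∧ b ∉ p ∧ c ∉ p ∧
          f * MvPolynomial.C w * b = g * MvPolynomial.C v * c) ∧
      (∀ v w : V, v ≠ 0 → w ≠ 0 →
        (∃ b c : A, b ∉ p ∧ c ∉ p ∧ MvPolynomial.C v * b = MvPolynomial.C w * c) →
        (v ∣ w ∧ w ∣ v)) :=
  polynomial_generic_point_valuation_ring_general V n
end

section
/- Let A be a commutative ring whose total ring of fractions K (the localisation of A at the multiplicative set of nonzerodivisors) is a finite product of fields (equivalently, K is a semisimple ring). Let 0 → M → M' → M'' be an exact sequence of finitely presented A-modules (i.e. the map M → M' is injective and its image equals the kernel of M' → M''). If M' and M'' are reflexive A-modules, then M is a reflexive A-module. -/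
/-!
Localisation at the nonzerodivisors is exact and the total ring of fractions `K` is semisimple,
so every functional on `M` extends to `M'` after base change to `K`; since `M'` is finitely
presented, the extension descends to `A` once a nonzerodivisor denominator is cleared. Hence the
cokernel of `f^∨ : M'^∨ → M^∨` is torsion, so `f^∨∨` is injective, and a diagram chase comparing
`0 → M → M' → M''` with its double dual (where `M' ≅ M'^∨∨` and `M'' ↪ M''^∨∨`) shows that
`M → M^∨∨` is bijective.
-/

open Module

section

variable {R : Type*} [CommRing R] {M M' M'' : Type*} [AddCommGroup M] [Module R M]
  [AddCommGroup M'] [Module R M'] [AddCommGroup M''] [Module R M'']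

theorem exists_extend_of_isSemisimpleRing_localization (S : Submonoid R)
    [IsSemisimpleRing (Localization S)] {N : Type*} [AddCommGroup N] [Module R N]
    [Module (Localization S) N] [IsScalarTower R (Localization S) N]
    (f : M →ₗ[R] M') (hf : Function.Injective f) (g : M →ₗ[R] N) :
    ∃ h : M' →ₗ[R] N, h ∘ₗ f = g := by
  have := isLocalizedModule_id S N (Localization S)
  let gₛ := (LocalizedModule.lift S g (IsLocalizedModule.map_units .id))
    |>.extendScalarsOfIsLocalization S (Localization S)
  obtain ⟨hₛ, hhₛ⟩ := IsSemisimpleModule.extension_property (LocalizedModule.map S f)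
    (LocalizedModule.map_injective S f hf) gₛ
  refine ⟨hₛ.restrictScalars R ∘ₗ LocalizedModule.mkLinearMap S M', LinearMap.ext fun x => ?_⟩
  simpa [gₛ, LocalizedModule.lift_mk] using LinearMap.congr_fun hhₛ (LocalizedModule.mk x 1)

theorem exists_smul_mem_range_dualMap_of_isSemisimpleRing_fractionRing
    [IsSemisimpleRing (FractionRing R)] [FinitePresentation R M'] (f : M →ₗ[R] M')
    (hf : Function.Injective f) (φ : Dual R M) :
    ∃ s ∈ nonZeroDivisors R, s • φ ∈ LinearMap.range f.dualMap := by
  obtain ⟨χ, hχ⟩ := exists_extend_of_isSemisimpleRing_localization (nonZeroDivisors R) f hf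
    (Algebra.linearMap R (FractionRing R) ∘ₗ φ)
  obtain ⟨ψ, s, hψ⟩ := FinitePresentation.exists_lift_of_isLocalizedModule (nonZeroDivisors R)
    (Algebra.linearMap R (FractionRing R)) χ
  refine ⟨s, s.2, ψ, LinearMap.ext fun x => IsFractionRing.injective R (FractionRing R) ?_⟩
  have hχx : χ (f x) = algebraMap R _ (φ x) := LinearMap.congr_fun hχ x
  simpa [hχx, Submonoid.smul_def, Algebra.smul_def] using LinearMap.congr_fun hψ (f x)

theorem LinearMap.dualMap_injective_of_forall_exists_smul_mem_range {N N' : Type*}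
    [AddCommGroup N] [Module R N] [AddCommGroup N'] [Module R N'] (u : N →ₗ[R] N')
    (hu : ∀ y, ∃ s ∈ nonZeroDivisors R, s • y ∈ range u) : Function.Injective u.dualMap := by
  refine (injective_iff_map_eq_zero _).2 fun η hη => LinearMap.ext fun y => ?_
  obtain ⟨s, hs, x, hx⟩ := hu y
  have : s * η y = 0 := by
    rw [← smul_eq_mul, ← map_smul, ← hx]
    exact LinearMap.congr_fun hη x
  exact (mem_nonZeroDivisors_iff_right.mp hs) _ (by rwa [mul_comm])

theorem Module.IsReflexive.of_exact [IsReflexive R M'] (f : M →ₗ[R] M') (g : M' →ₗ[R] M'')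
    (hf : Function.Injective f) (hfg : LinearMap.range f = LinearMap.ker g)
    (hf₂ : Function.Injective f.dualMap.dualMap)
    (heval'' : Function.Injective (Dual.eval R M'')) : IsReflexive R M := by
  have eval_f (m : M) : f.dualMap.dualMap (Dual.eval R M m) = Dual.eval R M' (f m) := rfl
  refine ⟨⟨fun a b hab => hf <| (bijective_dual_eval R M').injective ?_, fun ξ => ?_⟩⟩
  · rw [← eval_f, ← eval_f, hab]
  obtain ⟨m', hm'⟩ := (bijective_dual_eval R M').surjective (f.dualMap.dualMap ξ)
  have hgf : g ∘ₗ f = 0 := LinearMap.range_le_ker_iff.mp hfg.le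
  have : g m' = 0 := heval'' <| LinearMap.ext fun φ => by
    rw [map_zero, LinearMap.zero_apply]
    change Dual.eval R M' m' (g.dualMap φ) = 0
    rw [hm']
    change ξ (φ ∘ₗ g ∘ₗ f) = 0
    rw [hgf, LinearMap.comp_zero, map_zero]
  obtain ⟨m, rfl⟩ : m' ∈ LinearMap.range f := hfg ▸ this
  exact ⟨m, hf₂ (by rw [eval_f, hm'])⟩

end

theorem reflexive_of_exact_of_reflexive_general
    (A : Type*) [CommRing A]
    (hK : IsSemisimpleRing (FractionRing A))
    (M M' M'' : Type*) [AddCommGroup M] [Module A M]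
    [AddCommGroup M'] [Module A M'] [AddCommGroup M''] [Module A M'']
    (f : M →ₗ[A] M') (g : M' →ₗ[A] M'')
    (hf : Function.Injective f) (hfg : LinearMap.range f = LinearMap.ker g)
    (hM' : Module.FinitePresentation A M')
    (hrefl' : Module.IsReflexive A M') (hrefl'' : Module.IsReflexive A M'') :
    Module.IsReflexive A M :=
  .of_exact f g hf hfg
    (LinearMap.dualMap_injective_of_forall_exists_smul_mem_range _
      (exists_smul_mem_range_dualMap_of_isSemisimpleRing_fractionRing f hf))
    (bijective_dual_eval A M'').injective

/-- Let `A` be a commutative ring whose total ring of fractions (the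
localisation at the nonzerodivisors) is a finite product of fields, equivalently a
semisimple ring.  Given an exact sequence `0 → M → M' → M''` of finitely presented
`A`-modules with `M'` and `M''` reflexive, the module `M` is reflexive. -/
theorem reflexive_of_exact_of_reflexive
    (A : Type*) [CommRing A]
    (hK : IsSemisimpleRing (FractionRing A))
    (M M' M'' : Type*) [AddCommGroup M] [Module A M]
    [AddCommGroup M'] [Module A M'] [AddCommGroup M''] [Module A M'']
    (f : M →ₗ[A] M') (g : M' →ₗ[A] M'')
    (hf : Function.Injective f) (hfg : LinearMap.range f = LinearMap.ker g)
    (hM : Module.FinitePresentation A M) (hM' : Module.FinitePresentation A M')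
    (hM'' : Module.FinitePresentation A M'')
    (hrefl' : Module.IsReflexive A M') (hrefl'' : Module.IsReflexive A M'') :
    Module.IsReflexive A M :=
  reflexive_of_exact_of_reflexive_general A hK M M' M'' f g hf hfg hM' hrefl' hrefl''
end
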